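/- arXiv:1212.3740 — 3 statements merged into one kernel-verified Lean document; each statement's English description precedes it below -/
import Mathlib

section
/- Let S be a numerical semigroup with multiplicity m ≥ 2 and let g ≥ 1 be an integer such that for all nonzero s₁, s₂ ∈ S and all n ∈ {1,...,g}, s₁ + s₂ - n ∈ S. Then the conductor c of S satisfies c ≤ (x+1)m - x·g, where x = ⌊(m-2)/g⌋. -/
/-!
Adding the multiplicity `m` and then subtracting up to `g` keeps us inside `S`. Starting from
`m ∈ S` and iterating `k` times, every element of `[(k+1)m - k·min(m,g), (k+1)m]` lies in `S`.
Once `(k+1)·min(m,g) ≥ m - 1`, which holds for all `k ≥ x = ⌊(m-2)/g⌋`, consecutive intervals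
overlap or touch, so their union covers everything from `(x+1)m - x·g` on.
-/

section

variable {S : Set ℕ} {m g : ℕ}

theorem add_sub_mem_of_patterns (hadd : ∀ a b : ℕ, a ∈ S → b ∈ S → a + b ∈ S)
    (hpat : ∀ s₁ s₂ : ℕ, s₁ ∈ S → s₂ ∈ S → s₁ ≠ 0 → s₂ ≠ 0 →
      ∀ n : ℕ, 1 ≤ n → n ≤ g → s₁ + s₂ - n ∈ S)
    (hmS : m ∈ S) (hm : m ≠ 0) {s : ℕ} (hs : s ∈ S) (hs0 : s ≠ 0) {n : ℕ} (hn : n ≤ g) :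
    s + m - n ∈ S := by
  rcases Nat.eq_zero_or_pos n with rfl | hn0
  · exact hadd s m hs hmS
  · exact hpat s m hs hmS hs0 hm n hn0 hn

theorem succ_mul_sub_mem (hmS : m ∈ S)
    (hstep : ∀ s ∈ S, m ≤ s → ∀ n ≤ g, s + m - n ∈ S) {k d : ℕ} (hd : d ≤ k * min m g) :
    (k + 1) * m - d ∈ S := by
  induction k generalizing d with
  | zero => simpa [Nat.le_zero.mp (by simpa using hd)] using hmS
  | succ k ih =>
    set h := min m g
    have hkh : k * h ≤ k * m := Nat.mul_le_mul_left k (min_le_left m g)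
    rw [add_one_mul] at hd
    -- split `d` as `d' + n` with `d' ≤ k * h` and `n ≤ h`
    have hd' : d - min d h ≤ k * h := by omega
    have hstep' := hstep _ (ih hd') (by rw [add_one_mul]; omega) (min d h)
      ((min_le_right d h).trans (min_le_right m g))
    convert hstep' using 1
    rw [add_one_mul, add_one_mul k]
    omega

theorem Ici_subset_of_succ_mul_sub_mem {h x : ℕ} (hm : 0 < m)
    (hS : ∀ k d : ℕ, d ≤ k * h → (k + 1) * m - d ∈ S) (hx : m ≤ (x + 1) * h + 1) :
    Set.Ici ((x + 1) * m - x * h) ⊆ S := by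
  intro y (hy : (x + 1) * m - x * h ≤ y)
  suffices key : ∀ k, x ≤ k → y ≤ (k + 1) * m → y ∈ S from
    key (x + y) le_self_add (by nlinarith)
  intro k hk
  induction k, hk using Nat.le_induction with
  | base =>
    intro hym
    simpa [Nat.sub_sub_self hym] using hS x ((x + 1) * m - y) (by omega)
  | succ k hk ih =>
    intro hym
    by_cases hyk : y ≤ (k + 1) * m
    · exact ih hyk
    -- `y` then lies in the next interval, since it starts at most one above `(k + 1) * m`
    have hxk : (x + 1) * h ≤ (k + 1) * h := Nat.mul_le_mul_right h (by omega)
    rw [add_one_mul (k + 1)] at hym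
    simpa [Nat.sub_sub_self (add_one_mul (k + 1) m ▸ hym)] using
      hS (k + 1) ((k + 1 + 1) * m - y) (by rw [add_one_mul (k + 1)]; omega)

end

theorem le_sub_two_div_add_one_mul_min_add_one {m g : ℕ} (hg : 0 < g) :
    m ≤ ((m - 2) / g + 1) * min m g + 1 := by
  have hlt : m - 2 < ((m - 2) / g + 1) * g := by
    rw [add_one_mul]
    have := Nat.lt_div_mul_add (a := m - 2) hg
    omega
  rcases min_choice m g with h | h <;> rw [h]
  · rw [add_one_mul]; omega
  · omega

theorem sub_two_div_mul_min_eq (m g : ℕ) : (m - 2) / g * min m g = (m - 2) / g * g := by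
  rcases Nat.eq_zero_or_pos ((m - 2) / g) with hx | hx
  · simp [hx]
  · have : (m - 2) / g * g ≤ m - 2 := Nat.div_mul_le_self _ _
    have : g ≤ (m - 2) / g * g := Nat.le_mul_of_pos_left g hx
    rw [min_eq_right (by omega)]

theorem conductor_bound_patterns_general (S : Set ℕ)
    (hadd : ∀ a b : ℕ, a ∈ S → b ∈ S → a + b ∈ S)
    (m : ℕ) (hm : IsLeast {s : ℕ | s ∈ S ∧ 0 < s} m)
    (g : ℕ) (hg : 1 ≤ g)
    (hpat : ∀ s₁ s₂ : ℕ, s₁ ∈ S → s₂ ∈ S → s₁ ≠ 0 → s₂ ≠ 0 →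
      ∀ n : ℕ, 1 ≤ n → n ≤ g → s₁ + s₂ - n ∈ S)
    (c : ℕ) (hc : IsLeast {c' : ℕ | ∀ x : ℕ, c' ≤ x → x ∈ S} c) :
    c ≤ ((m - 2) / g + 1) * m - ((m - 2) / g) * g := by
  obtain ⟨⟨hmS, hm0⟩, -⟩ := hm
  have hstep : ∀ s ∈ S, m ≤ s → ∀ n ≤ g, s + m - n ∈ S := fun s hs hms _ hn =>
    add_sub_mem_of_patterns hadd hpat hmS hm0.ne' hs (by omega) hn
  have hcover := Ici_subset_of_succ_mul_sub_mem hm0 (fun _ _ => succ_mul_sub_mem hmS hstep)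
    (le_sub_two_div_add_one_mul_min_add_one (m := m) hg)
  rw [sub_two_div_mul_min_eq] at hcover
  exact hc.2 fun y hy => hcover hy

/-- If a numerical semigroup S with multiplicity m ≥ 2 admits the patterns
X₁+X₂-n for 1 ≤ n ≤ g, then its conductor c satisfies
c ≤ (x+1)m - x·g where x = ⌊(m-2)/g⌋. -/
theorem conductor_bound_patterns (S : Set ℕ)
    (h0 : (0 : ℕ) ∈ S)
    (hadd : ∀ a b : ℕ, a ∈ S → b ∈ S → a + b ∈ S)
    (hfin : Sᶜ.Finite)
    (m : ℕ) (hm : IsLeast {s : ℕ | s ∈ S ∧ 0 < s} m) (hm2 : 2 ≤ m)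
    (g : ℕ) (hg : 1 ≤ g)
    (hpat : ∀ s₁ s₂ : ℕ, s₁ ∈ S → s₂ ∈ S → s₁ ≠ 0 → s₂ ≠ 0 →
      ∀ n : ℕ, 1 ≤ n → n ≤ g → s₁ + s₂ - n ∈ S)
    (c : ℕ) (hc : IsLeast {c' : ℕ | ∀ x : ℕ, c' ≤ x → x ∈ S} c) :
    c ≤ ((m - 2) / g + 1) * m - ((m - 2) / g) * g :=
  conductor_bound_patterns_general S hadd m hm g hg hpat c hc
end

section
/- Let S be a numerical semigroup containing d ≥ 2 and g ≥ 1 an integer such that for all nonzero s₁, s₂ ∈ S and all n ∈ {1,...,g}, s₁ + s₂ - n ∈ S. Then for every x ≥ 0, the entire integer interval [(x+1)d - x·g, (x+1)d] is contained in S. -/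
/-!
Write `I x` for the interval `[(x+1)d - xg, (x+1)d]`. Every point of `I (x+1)` has the form
`s + d - n` with `s ∈ I x`, `s ≠ 0` and `0 ≤ n ≤ g`, except for the points `y ≤ d - g`, which
already lie in `I x`. So `I x ⊆ S` gives `I (x+1) ⊆ S`, starting from `I 0 = {d}`.
-/

/-- `I x`, with `(x+1)d - xg ≤ y` written as `(x+1)d ≤ y + xg` to avoid truncated subtraction. -/
def patternInterval (d g x : ℕ) : Set ℕ :=
  {y | (x + 1) * d ≤ y + x * g ∧ y ≤ (x + 1) * d}

section

variable {S : Set ℕ} {d g : ℕ}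

theorem add_sub_mem_of_pattern (hadd : ∀ a b : ℕ, a ∈ S → b ∈ S → a + b ∈ S)
    (hpat : ∀ s₁ s₂ : ℕ, s₁ ∈ S → s₂ ∈ S → s₁ ≠ 0 → s₂ ≠ 0 →
      ∀ n : ℕ, 1 ≤ n → n ≤ g → s₁ + s₂ - n ∈ S)
    (hd : d ∈ S) (hd0 : d ≠ 0) {s : ℕ} (hs : s ∈ S) (hs0 : s ≠ 0) {n : ℕ} (hn : n ≤ g) :
    s + d - n ∈ S := by
  rcases Nat.eq_zero_or_pos n with rfl | hn1
  · exact hadd s d hs hd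
  · exact hpat s d hs hd hs0 hd0 n hn1 hn

theorem patternInterval_zero (d g : ℕ) : patternInterval d g 0 = {d} := by
  ext y
  simp only [patternInterval, Set.mem_ofPred_eq, Set.mem_singleton_iff]
  omega

theorem patternInterval_succ_subset (hd0 : d ≠ 0)
    (hshift : ∀ s ∈ S, s ≠ 0 → ∀ n ≤ g, s + d - n ∈ S) {x : ℕ}
    (hx : patternInterval d g x ⊆ S) : patternInterval d g (x + 1) ⊆ S := by
  intro y hy
  simp only [patternInterval, Set.mem_ofPred_eq, add_one_mul] at hy hx ⊢
  by_cases hlow : y + g ≤ d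
  · exact hx ⟨by omega, by omega⟩
  · -- the largest `s ∈ I x` with `s + d - g ≤ y`
    set s := min (x * d + d) (y + g - d)
    have hs : s ∈ S := hx ⟨by omega, by omega⟩
    have hy_eq : s + d - (s + d - y) = y := by omega
    exact hy_eq ▸ hshift s hs (by omega) (s + d - y) (by omega)

theorem patternInterval_subset (hd : d ∈ S) (hd0 : d ≠ 0)
    (hshift : ∀ s ∈ S, s ≠ 0 → ∀ n ≤ g, s + d - n ∈ S) (x : ℕ) :
    patternInterval d g x ⊆ S := by
  induction x with
  | zero => simpa [patternInterval_zero] using hd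
  | succ x ih => exact patternInterval_succ_subset hd0 hshift ih

end

theorem intervals_in_semigroup_general (S : Set ℕ)
    (hadd : ∀ a b : ℕ, a ∈ S → b ∈ S → a + b ∈ S)
    (d : ℕ) (hd : d ∈ S) (hd2 : 2 ≤ d)
    (g : ℕ)
    (hpat : ∀ s₁ s₂ : ℕ, s₁ ∈ S → s₂ ∈ S → s₁ ≠ 0 → s₂ ≠ 0 →
      ∀ n : ℕ, 1 ≤ n → n ≤ g → s₁ + s₂ - n ∈ S) :
    ∀ x : ℕ, ∀ y : ℕ,
      ((x + 1) * d : ℤ) - x * g ≤ (y : ℤ) → y ≤ (x + 1) * d → y ∈ S := by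
  intro x y hlo hhi
  have hd0 : d ≠ 0 := by omega
  have hlo' : (x + 1) * d ≤ y + x * g := by
    have : ((x + 1) * d : ℤ) ≤ y + x * g := by linarith
    exact_mod_cast this
  exact patternInterval_subset hd hd0
    (fun s hs hs0 n hn => add_sub_mem_of_pattern hadd hpat hd hd0 hs hs0 hn) x ⟨hlo', hhi⟩

/-- If a numerical semigroup S contains d ≥ 2 and admits the patterns X₁+X₂-n
for 1 ≤ n ≤ g, then for every x ≥ 0 the integer interval
[(x+1)d - xg, (x+1)d] is contained in S. -/
theorem intervals_in_semigroup (S : Set ℕ)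
    (h0 : (0 : ℕ) ∈ S)
    (hadd : ∀ a b : ℕ, a ∈ S → b ∈ S → a + b ∈ S)
    (hfin : Sᶜ.Finite)
    (d : ℕ) (hd : d ∈ S) (hd2 : 2 ≤ d)
    (g : ℕ) (hg : 1 ≤ g)
    (hpat : ∀ s₁ s₂ : ℕ, s₁ ∈ S → s₂ ∈ S → s₁ ≠ 0 → s₂ ≠ 0 →
      ∀ n : ℕ, 1 ≤ n → n ≤ g → s₁ + s₂ - n ∈ S) :
    ∀ x : ℕ, ∀ y : ℕ,
      ((x + 1) * d : ℤ) - x * g ≤ (y : ℤ) → y ≤ (x + 1) * d → y ∈ S :=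
  intervals_in_semigroup_general S hadd d hd hd2 g hpat
end

section
/- For integers r ≥ 2 and a prime power q ≥ r, the incidence structure obtained from the affine plane AG(2,q) by taking all lines of r chosen parallel classes, restricted to the points lying on k chosen lines of a further parallel class (with k ≤ q, k ≥ 2, and r ≤ q), is a combinatorial configuration with kq points, rq lines, r lines through every point, and k points on every line. -/
/-!
The points are the `(x, y)` with `x ∈ K`, the lines the `y = m x + b` with `m ∈ M`. A point lies on
exactly one line of each slope, a line meets each vertical line `x = c` in exactly one point, and
two points with different abscissae determine the slope `(y₁ - y₂) / (x₁ - x₂)` and hence the line,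
while two distinct points with the same abscissa lie on no common non-vertical line.
-/

section AffineLines

variable {R : Type*}

theorem card_fst_mem_finset {S : Type*} (K : Finset R) :
    Nat.card {p : R × S // p.1 ∈ K} = K.card * Nat.card S := by
  rw [Nat.card_congr Equiv.prodSubtypeFstEquivSubtypeProd, Nat.card_prod, Nat.card_eq_finsetCard]

variable [Ring R]

def slopeEquivOfPoint (M : Finset R) (x y : R) : {l : M × R // y = (l.1 : R) * x + l.2} ≃ M where
  toFun l := l.1.1
  invFun m := ⟨(m, y - m * x), (add_sub_cancel _ _).symm⟩
  left_inv := fun ⟨⟨_, _⟩, h⟩ => Subtype.ext (Prod.ext rfl (sub_eq_of_eq_add' h))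
  right_inv _ := rfl

def abscissaEquivOfLine (K : Finset R) (m b : R) :
    {p : {p : R × R // p.1 ∈ K} // (p : R × R).2 = m * (p : R × R).1 + b} ≃ K where
  toFun p := ⟨(p.1 : R × R).1, p.1.2⟩
  invFun x := ⟨⟨(x, m * x + b), x.2⟩, rfl⟩
  left_inv := fun ⟨⟨⟨_, _⟩, _⟩, h⟩ => Subtype.ext (Subtype.ext (Prod.ext rfl h.symm))
  right_inv _ := rfl

theorem card_lines_through_point (M : Finset R) (x y : R) :
    Nat.card {l : M × R // y = (l.1 : R) * x + l.2} = M.card := by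
  rw [Nat.card_congr (slopeEquivOfPoint M x y), Nat.card_eq_finsetCard]

theorem card_points_on_line (K : Finset R) (m b : R) :
    Nat.card {p : {p : R × R // p.1 ∈ K} // (p : R × R).2 = m * (p : R × R).1 + b} = K.card := by
  rw [Nat.card_congr (abscissaEquivOfLine K m b), Nat.card_eq_finsetCard]

theorem eq_of_mem_line_of_mem_line [NoZeroDivisors R] {p₁ p₂ : R × R} (hp : p₁ ≠ p₂)
    {m b m' b' : R} (h₁ : p₁.2 = m * p₁.1 + b) (h₂ : p₂.2 = m * p₂.1 + b)
    (h₁' : p₁.2 = m' * p₁.1 + b') (h₂' : p₂.2 = m' * p₂.1 + b') : m = m' ∧ b = b' := by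
  obtain ⟨x₁, y₁⟩ := p₁
  obtain ⟨x₂, y₂⟩ := p₂
  dsimp only at *
  have hx : x₁ - x₂ ≠ 0 := by
    rintro hx
    obtain rfl := sub_eq_zero.mp hx
    exact hp (by rw [h₁, h₂])
  have hm : m = m' := mul_right_cancel₀ hx <| by
    calc m * (x₁ - x₂) = y₁ - y₂ := by rw [h₁, h₂]; noncomm_ring
      _ = m' * (x₁ - x₂) := by rw [h₁', h₂']; noncomm_ring
  subst hm
  exact ⟨rfl, add_left_cancel (h₁.symm.trans h₁')⟩

theorem card_lines_through_two_points_le_one [NoZeroDivisors R] (M : Finset R) {p₁ p₂ : R × R}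
    (hp : p₁ ≠ p₂) :
    Nat.card {l : M × R // p₁.2 = (l.1 : R) * p₁.1 + l.2 ∧ p₂.2 = (l.1 : R) * p₂.1 + l.2} ≤ 1 := by
  have : Subsingleton
      {l : M × R // p₁.2 = (l.1 : R) * p₁.1 + l.2 ∧ p₂.2 = (l.1 : R) * p₂.1 + l.2} :=
    ⟨fun ⟨⟨m, b⟩, h₁, h₂⟩ ⟨⟨m', b'⟩, h₁', h₂'⟩ => by
      obtain ⟨hm, rfl⟩ := eq_of_mem_line_of_mem_line hp h₁ h₂ h₁' h₂'
      obtain rfl := Subtype.ext hm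
      rfl⟩
  exact Finite.card_le_one_iff_subsingleton.mpr this

end AffineLines

theorem affine_plane_configuration_general {F : Type*} [Field F] [Fintype F]
    (q r k : ℕ) (hq : Fintype.card F = q)
    (M K : Finset F) (hM : M.card = r) (hK : K.card = k) :
    Nat.card {p : F × F // p.1 ∈ K} = k * q ∧
    Nat.card (M × F) = r * q ∧
    (∀ p : {p : F × F // p.1 ∈ K},
      Nat.card {l : M × F // (p : F × F).2 = (l.1 : F) * (p : F × F).1 + l.2}
        = r) ∧
    (∀ l : M × F,
      Nat.card {p : {p : F × F // p.1 ∈ K} //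
        (p : F × F).2 = (l.1 : F) * (p : F × F).1 + l.2} = k) ∧
    (∀ p₁ p₂ : {p : F × F // p.1 ∈ K}, p₁ ≠ p₂ →
      Nat.card {l : M × F //
        (p₁ : F × F).2 = (l.1 : F) * (p₁ : F × F).1 + l.2 ∧
        (p₂ : F × F).2 = (l.1 : F) * (p₂ : F × F).1 + l.2} ≤ 1) := by
  have hcardF : Nat.card F = q := Nat.card_eq_fintype_card.trans hq
  refine ⟨?_, ?_, fun p => ?_, fun l => ?_, fun p₁ p₂ hne => ?_⟩
  · rw [card_fst_mem_finset, hK, hcardF]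
  · rw [Nat.card_prod, Nat.card_eq_finsetCard, hM, hcardF]
  · rw [card_lines_through_point, hM]
  · rw [card_points_on_line, hK]
  · exact card_lines_through_two_points_le_one M (Subtype.coe_injective.ne hne)

/-- The incidence structure obtained from the affine plane AG(2,q) (q a prime
power, modeled by a finite field F with |F| = q) by taking the lines of r
parallel classes (given by a set M of r slopes) restricted to the points on k
lines of a further parallel class (the vertical lines x = c, c ∈ K, |K| = k)
is a combinatorial (kq, rq, r, k)-configuration. -/
theorem affine_plane_configuration {F : Type*} [Field F] [Fintype F]
    (q r k : ℕ) (hq : Fintype.card F = q) (hr2 : 2 ≤ r) (hk2 : 2 ≤ k)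
    (M K : Finset F) (hM : M.card = r) (hK : K.card = k) :
    Nat.card {p : F × F // p.1 ∈ K} = k * q ∧
    Nat.card (M × F) = r * q ∧
    (∀ p : {p : F × F // p.1 ∈ K},
      Nat.card {l : M × F // (p : F × F).2 = (l.1 : F) * (p : F × F).1 + l.2}
        = r) ∧
    (∀ l : M × F,
      Nat.card {p : {p : F × F // p.1 ∈ K} //
        (p : F × F).2 = (l.1 : F) * (p : F × F).1 + l.2} = k) ∧
    (∀ p₁ p₂ : {p : F × F // p.1 ∈ K}, p₁ ≠ p₂ →
      Nat.card {l : M × F //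
        (p₁ : F × F).2 = (l.1 : F) * (p₁ : F × F).1 + l.2 ∧
        (p₂ : F × F).2 = (l.1 : F) * (p₂ : F × F).1 + l.2} ≤ 1) :=
  affine_plane_configuration_general q r k hq M K hM hK
end
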